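/- arXiv:1907.05838 — 2 statements merged into one kernel-verified Lean document; each statement's English description precedes it below -/
import Mathlib

section
/- Let $V$ be a finite-dimensional vector space over a field and $\gamma$ an endomorphism of $V$. The natural map $\ker(1 - \gamma) \to \operatorname{coker}(1 - \gamma)$ induced by the identity of $V$ is bijective if and only if $1$ is not a multiple root of the minimal polynomial of $\gamma$. -/
/-!
With `f = 1 - γ`, the map `ker f → V ⧸ range f` has kernel `ker f ⊓ range f`, which vanishes
iff `ker f² = ker f`; since source and target have the same dimension, injectivity already
gives bijectivity. Writing `p = X - 1`, the condition `ker p(γ)² ≤ ker p(γ)` holds iff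
`p² ∤ minpoly γ`: if `p² ∤ minpoly γ` then `gcd(p², minpoly γ) ∣ p` and Bézout does it; if
`minpoly γ = p² q` then `q(γ)` maps into `ker p(γ)² ≤ ker p(γ)`, so `minpoly γ ∣ p q`, which is
too small.
-/

open Polynomial

namespace Submodule

theorem injective_mkQ_comp_subtype_iff {R M : Type*} [Ring R] [AddCommGroup M] [Module R M]
    (p q : Submodule R M) : Function.Injective (q.mkQ ∘ₗ p.subtype) ↔ Disjoint p q := by
  rw [← LinearMap.ker_eq_bot, LinearMap.ker_comp, ker_mkQ, disjoint_iff_comap_eq_bot]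

end Submodule

namespace LinearMap

theorem disjoint_ker_range_iff_ker_sq_le_ker {R M : Type*} [Ring R] [AddCommGroup M] [Module R M]
    (f : Module.End R M) : Disjoint (ker f) (range f) ↔ ker (f ^ 2) ≤ ker f := by
  simp only [Submodule.disjoint_def, SetLike.le_def, mem_ker, mem_range, pow_two,
    Module.End.mul_apply]
  constructor
  · intro h v hv
    exact h (f v) hv ⟨v, rfl⟩
  · rintro h _ hw ⟨v, rfl⟩
    exact h hw

theorem finrank_ker_eq_finrank_quotient_range {K V : Type*} [DivisionRing K] [AddCommGroup V]
    [Module K V] [FiniteDimensional K V] (f : Module.End K V) :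
    Module.finrank K (ker f) = Module.finrank K (V ⧸ range f) := by
  have := finrank_range_add_finrank_ker f
  have := (range f).finrank_quotient_add_finrank
  omega

theorem bijective_range_mkQ_comp_ker_subtype_iff {K V : Type*} [DivisionRing K] [AddCommGroup V]
    [Module K V] [FiniteDimensional K V] (f : Module.End K V) :
    Function.Bijective ((range f).mkQ ∘ₗ (ker f).subtype) ↔ ker (f ^ 2) ≤ ker f := by
  rw [← disjoint_ker_range_iff_ker_sq_le_ker, ← Submodule.injective_mkQ_comp_subtype_iff]
  exact ⟨And.left, fun h ↦ ⟨h,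
    (injective_iff_surjective_of_finrank_eq_finrank (finrank_ker_eq_finrank_quotient_range f)).1 h⟩⟩

end LinearMap

theorem dvd_of_dvd_sq_of_not_sq_dvd {M : Type*} [CommMonoidWithZero M] [IsCancelMulZero M]
    {p d : M} (hp : Prime p) (hd : d ∣ p ^ 2) (hd' : ¬ p ^ 2 ∣ d) : d ∣ p := by
  obtain ⟨i, hi, hassoc⟩ := (dvd_prime_pow hp 2).1 hd
  interval_cases i
  · exact hassoc.dvd.trans (by simp)
  · simpa using hassoc.dvd
  · exact absurd hassoc.symm.dvd hd'

namespace Module.End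

variable {K M : Type*} [Field K] [AddCommGroup M] [Module K M]

theorem ker_aeval_le_ker_aeval_of_gcd_dvd (f : Module.End K M) {g h m : K[X]}
    (hm : aeval f m = 0) (hgcd : IsBezout.gcd g m ∣ h) :
    LinearMap.ker (aeval f g) ≤ LinearMap.ker (aeval f h) := by
  obtain ⟨a, b, hab⟩ := IsBezout.gcd_eq_sum g m
  obtain ⟨c, rfl⟩ := hgcd
  intro v hv
  rw [LinearMap.mem_ker] at hv ⊢
  rw [← hab, show (a * g + b * m) * c = c * a * g + c * b * m by ring]
  simp [Module.End.mul_apply, hv, hm]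

theorem not_sq_dvd_minpoly_iff [FiniteDimensional K M] (f : Module.End K M) {p : K[X]}
    (hp : Prime p) :
    ¬ p ^ 2 ∣ minpoly K f ↔ LinearMap.ker (aeval f (p ^ 2)) ≤ LinearMap.ker (aeval f p) := by
  constructor
  · intro hsq
    refine ker_aeval_le_ker_aeval_of_gcd_dvd f (minpoly.aeval K f) ?_
    exact dvd_of_dvd_sq_of_not_sq_dvd hp (IsBezout.gcd_dvd_left _ _)
      fun h ↦ hsq (h.trans (IsBezout.gcd_dvd_right _ _))
  · rintro hker ⟨q, hq⟩
    have hpq : minpoly K f ∣ p * q := by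
      rw [minpoly.dvd_iff]
      ext v
      have : aeval f q v ∈ LinearMap.ker (aeval f (p ^ 2)) := by
        rw [LinearMap.mem_ker, ← Module.End.mul_apply, ← map_mul, ← hq, minpoly.aeval]
        rfl
      simpa [Module.End.mul_apply] using hker this
    have hm0 : p * (p * q) ≠ 0 := by
      rw [← mul_assoc, ← pow_two, ← hq]
      exact minpoly.ne_zero (Algebra.IsIntegral.isIntegral f)
    rw [hq, pow_two, mul_assoc] at hpq
    have hp1 : p ∣ 1 := (mul_dvd_mul_iff_right (right_ne_zero_of_mul hm0)).1 (by simpa using hpq)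
    exact hp.not_isUnit (isUnit_of_dvd_one hp1)

end Module.End

/-- The natural map `ker(1-γ) → coker(1-γ)` is bijective iff `1` is not a
multiple root of the minimal polynomial of `γ`. -/
theorem stmt_6 (K : Type*) [Field K] (V : Type*) [AddCommGroup V] [Module K V]
    [FiniteDimensional K V] (γ : Module.End K V) :
    Function.Bijective
      ((LinearMap.range ((1 : Module.End K V) - γ)).mkQ.comp
        (LinearMap.ker ((1 : Module.End K V) - γ)).subtype) ↔
      ¬ ((X - 1) ^ 2 ∣ minpoly K γ) := by
  have hX : aeval γ (X - 1 : K[X]) = -(1 - γ) := by simp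
  rw [LinearMap.bijective_range_mkQ_comp_ker_subtype_iff,
    Module.End.not_sq_dvd_minpoly_iff γ (by simpa using prime_X_sub_C (1 : K)), map_pow, hX,
    neg_sq, LinearMap.ker_neg]
end

section
/- Let $M$ be a finitely generated $\mathbb{Z}_p$-module with endomorphism $\gamma$, and let $f : \ker(1-\gamma) \to M/\operatorname{im}(1-\gamma)$ be the map induced by the identity. Then $f$ has finite kernel and finite cokernel if and only if $1$ is not a multiple root of the minimal polynomial of $\gamma$ acting on $M \otimes \mathbb{Q}_p$. -/
/-!
`ker f ≅ M^Γ ∩ (1 - γ)M` and `coker f ≅ M / (M^Γ + (1 - γ)M)` are finitely generated over `ℤ_p`,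
so they are finite iff they are torsion, i.e. iff they die after tensoring with `ℚ_p`. Since
localization is exact, this says that `T = 1 - γ` on `V = M ⊗ ℚ_p` satisfies `ker T ∩ im T = 0` and
`ker T + im T = V`; by rank–nullity the two conditions are equivalent. Finally `ker T ∩ im T ≠ 0`,
i.e. `T` has a Jordan block of size at least `2` at `0`, exactly when `(X - 1)²` divides the
minimal polynomial of `γ`.
-/

open Polynomial

instance PadicInt.hasFiniteQuotients (p : ℕ) [Fact p.Prime] : Ring.HasFiniteQuotients ℤ_[p] where
  finiteQuotient {I} hI := by
    obtain ⟨n, rfl⟩ := PadicInt.ideal_eq_span_pow_p hI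
    rw [← PadicInt.ker_toZModPow]
    exact Finite.of_injective _ (RingHom.kerLift_injective (PadicInt.toZModPow n))

namespace Module

variable {R N : Type*} [CommRing R] [AddCommGroup N] [Module R N]

theorem isTorsion_of_finite [IsDomain R] [Infinite R] [Finite N] : IsTorsion R N := by
  intro x
  obtain ⟨a, b, hab, h⟩ := Finite.exists_ne_map_eq_of_infinite (fun r : R => r • x)
  exact ⟨⟨a - b, mem_nonZeroDivisors_of_ne_zero (sub_ne_zero.mpr hab)⟩,
    by simp only [Submonoid.smul_def, sub_smul, h, sub_self]⟩

theorem finite_of_isTorsion [Nontrivial R] [Ring.HasFiniteQuotients R] [Module.Finite R N]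
    (h : IsTorsion R N) : Finite N := by
  obtain ⟨r, hr, hr0⟩ := Submodule.annihilator_top_inter_nonZeroDivisors h
  let := Module.quotientAnnihilator (R := R) (M := N)
  have : Finite (R ⧸ annihilator R N) := Ring.HasFiniteQuotients.finiteQuotient <|
    (Submodule.ne_bot_iff _).mpr
      ⟨r, (Submodule.annihilator_top (R := R) (M := N)) ▸ hr, nonZeroDivisors.ne_zero hr0⟩
  have : Module.Finite (R ⧸ annihilator R N) N := Module.Finite.of_restrictScalars_finite R _ N
  exact Module.finite_of_finite (R ⧸ annihilator R N)

theorem finite_iff_isTorsion [IsDomain R] [Infinite R] [Ring.HasFiniteQuotients R] [Module.Finite R N] :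
    Finite N ↔ IsTorsion R N :=
  ⟨fun _ => isTorsion_of_finite, finite_of_isTorsion⟩

end Module

namespace Module.End

variable {K V : Type*} [Field K] [AddCommGroup V] [Module K V]

theorem aeval_X_sub_C (g : Module.End K V) (a : K) :
    aeval g (X - C a) = g - algebraMap K (Module.End K V) a := by
  simp only [map_sub, aeval_X, aeval_C]

variable [FiniteDimensional K V] {g : Module.End K V} {a : K}

theorem not_sq_X_sub_C_dvd_minpoly_of_disjoint
    (hdisj : Disjoint (LinearMap.ker (g - algebraMap K _ a))
      (LinearMap.range (g - algebraMap K _ a))) :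
    ¬ (X - C a) ^ 2 ∣ minpoly K g := by
  rintro ⟨c, hc⟩
  set T := g - algebraMap K (Module.End K V) a with hT
  have hc0 : c ≠ 0 := by
    rintro rfl
    exact minpoly.ne_zero (Algebra.IsIntegral.isIntegral g) (by rwa [mul_zero] at hc)
  -- `T (c(g) v)` lies in `ker T ⊓ range T`, so `(X - a) c` already annihilates `g`
  have hann : aeval g ((X - C a) * c) = 0 := by
    ext v
    have hker : T (T (aeval g c v)) = 0 := by
      rw [← Module.End.mul_apply, ← sq, hT, ← aeval_X_sub_C, ← map_pow, ← Module.End.mul_apply,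
        ← map_mul, ← hc, minpoly.aeval, LinearMap.zero_apply]
    have := Submodule.disjoint_def.mp hdisj _ hker ⟨_, rfl⟩
    rwa [map_mul, aeval_X_sub_C, ← hT, Module.End.mul_apply]
  have hdvd : (X - C a) * ((X - C a) * c) ∣ 1 * ((X - C a) * c) := by
    rw [← mul_assoc, ← sq, ← hc, one_mul]
    exact minpoly.dvd K g hann
  rw [mul_dvd_mul_iff_right (mul_ne_zero (X_sub_C_ne_zero a) hc0)] at hdvd
  exact not_isUnit_X_sub_C a (isUnit_of_dvd_one hdvd)

theorem disjoint_ker_range_of_not_sq_X_sub_C_dvd_minpoly (hndvd : ¬ (X - C a) ^ 2 ∣ minpoly K g) :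
    Disjoint (LinearMap.ker (g - algebraMap K _ a)) (LinearMap.range (g - algebraMap K _ a)) := by
  set T := g - algebraMap K (Module.End K V) a with hT
  obtain ⟨q, hq, hqa⟩ := exists_eq_pow_rootMultiplicity_mul_and_not_dvd _
    (minpoly.ne_zero (Algebra.IsIntegral.isIntegral g)) a
  set e := rootMultiplicity a (minpoly K g)
  have he : e ≤ 1 := by
    by_contra! h
    exact hndvd (hq ▸ (pow_dvd_pow _ h).mul_right q)
  have hann : aeval g (q * (X - C a)) = 0 := by
    rw [← minpoly.dvd_iff, hq, mul_comm q]
    exact mul_dvd_mul_right (by simpa using pow_dvd_pow (X - C a) he) q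
  rw [Submodule.disjoint_def]
  rintro _ hx ⟨w, rfl⟩
  by_contra hx0
  -- `T w` is an eigenvector for `a`, on which `q(g)` acts as `q(a) ≠ 0`, yet `q(g) (T w) = 0`
  have hev : g.HasEigenvector a (T w) := by
    refine hasEigenvector_iff.mpr ⟨?_, hx0⟩
    simpa [mem_eigenspace_iff, hT, sub_eq_zero] using LinearMap.mem_ker.mp hx
  have hqT : aeval g q (T w) = 0 := by
    rw [hT, ← aeval_X_sub_C, ← Module.End.mul_apply, ← map_mul, hann, LinearMap.zero_apply]
  rw [aeval_apply_of_hasEigenvector hev, smul_eq_zero] at hqT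
  exact hqT.elim (fun h => hqa (dvd_iff_isRoot.mpr h)) hx0

theorem not_sq_X_sub_C_dvd_minpoly_iff :
    ¬ (X - C a) ^ 2 ∣ minpoly K g ↔
      Disjoint (LinearMap.ker (g - algebraMap K _ a)) (LinearMap.range (g - algebraMap K _ a)) :=
  ⟨disjoint_ker_range_of_not_sq_X_sub_C_dvd_minpoly, not_sq_X_sub_C_dvd_minpoly_of_disjoint⟩

end Module.End

namespace IsLocalizedModule

variable {R M M' : Type*} [CommSemiring R] (S : Submonoid R) [AddCommMonoid M] [Module R M]
  [AddCommMonoid M'] [Module R M']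

theorem subsingleton_iff_isTorsion' (f : M →ₗ[R] M') [IsLocalizedModule S f] :
    Subsingleton M' ↔ Module.IsTorsion' M S := by
  refine ⟨fun _ m => (eq_zero_iff S f).mp (Subsingleton.elim _ _), fun h => ?_⟩
  refine (subsingleton_iff_forall_eq 0).mpr fun y => ?_
  obtain ⟨⟨m, s⟩, rfl⟩ := mk'_surjective S f y
  exact (mk'_eq_zero' f s).mpr (h (x := m))

end IsLocalizedModule

section Localization

variable {R A M N : Type*} [CommRing R] [CommRing A] [Algebra R A] (S : Submonoid R)
  [IsLocalization S A] [AddCommGroup M] [Module R M] [AddCommGroup N] [Module R N] [Module A N]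
  [IsScalarTower R A N] (f : M →ₗ[R] N) [IsLocalizedModule S f]

namespace Submodule

theorem localized'_eq_bot_iff (P : Submodule R M) :
    P.localized' A S f = ⊥ ↔ Module.IsTorsion' P S := by
  rw [← subsingleton_iff_eq_bot]
  exact IsLocalizedModule.subsingleton_iff_isTorsion' S (P.toLocalized' A S f)

theorem localized'_eq_top_iff (P : Submodule R M) :
    P.localized' A S f = ⊤ ↔ Module.IsTorsion' (M ⧸ P) S := by
  rw [← Quotient.subsingleton_iff]
  exact IsLocalizedModule.subsingleton_iff_isTorsion' S (P.toLocalizedQuotient' A S f)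

theorem localized'_sup (P Q : Submodule R M) :
    (P ⊔ Q).localized' A S f = P.localized' A S f ⊔ Q.localized' A S f :=
  (localized'gi A S f).gc.l_sup

end Submodule

namespace LinearMap

variable {P Q : Type*} [AddCommGroup P] [Module R P] [AddCommGroup Q] [Module R Q] [Module A Q]
  [IsScalarTower R A Q] (f' : P →ₗ[R] Q) [IsLocalizedModule S f']

theorem eq_extendScalarsOfIsLocalization_map {u : M →ₗ[R] P} {T : N →ₗ[A] Q}
    (hT : ∀ m, T (f m) = f' (u m)) :
    T = (IsLocalizedModule.map S f f' u).extendScalarsOfIsLocalization S A :=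
  LinearMap.restrictScalars_injective R <| IsLocalizedModule.linearMap_ext S f f' <| by
    ext m
    simp [hT]

theorem ker_eq_localized'_ker {u : M →ₗ[R] P} {T : N →ₗ[A] Q}
    (hT : ∀ m, T (f m) = f' (u m)) :
    ker T = (ker u).localized' A S f := by
  rw [eq_extendScalarsOfIsLocalization_map S f f' hT, localized'_ker_eq_ker_localizedMap A S f f']

theorem range_eq_localized'_range {u : M →ₗ[R] P} {T : N →ₗ[A] Q}
    (hT : ∀ m, T (f m) = f' (u m)) :
    range T = (range u).localized' A S f' := by
  rw [eq_extendScalarsOfIsLocalization_map S f f' hT,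
    localized'_range_eq_range_localizedMap A S f f']

theorem disjoint_ker_range_iff_isTorsion' {u : Module.End R M} {T : Module.End A N}
    (hT : ∀ m, T (f m) = f (u m)) :
    Disjoint (ker T) (range T) ↔ Module.IsTorsion' ↥(ker u ⊓ range u) S := by
  rw [disjoint_iff, ker_eq_localized'_ker S f f hT, range_eq_localized'_range S f f hT,
    ← Submodule.localized'_inf, Submodule.localized'_eq_bot_iff]

theorem codisjoint_ker_range_iff_isTorsion' {u : Module.End R M} {T : Module.End A N}
    (hT : ∀ m, T (f m) = f (u m)) :
    Codisjoint (ker T) (range T) ↔ Module.IsTorsion' (M ⧸ (ker u ⊔ range u)) S := by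
  rw [codisjoint_iff, ker_eq_localized'_ker S f f hT, range_eq_localized'_range S f f hT,
    ← Submodule.localized'_sup, Submodule.localized'_eq_top_iff]

end LinearMap

end Localization

namespace Submodule

variable {R M : Type*} [Ring R] [AddCommGroup M] [Module R M] (P Q : Submodule R M)

noncomputable def kerMkQCompSubtypeEquiv : LinearMap.ker (P.mkQ ∘ₗ Q.subtype) ≃ₗ[R] ↥(Q ⊓ P) :=
  (LinearEquiv.ofEq _ _ (by rw [LinearMap.ker_comp, ker_mkQ])).trans <|
    ((comap Q.subtype P).equivMapOfInjective _ Q.injective_subtype).trans <|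
      LinearEquiv.ofEq _ _ (map_comap_subtype Q P)

noncomputable def cokerMkQCompSubtypeEquiv :
    ((M ⧸ P) ⧸ LinearMap.range (P.mkQ ∘ₗ Q.subtype)) ≃ₗ[R] M ⧸ (Q ⊔ P) :=
  (quotEquivOfEq _ _ (by rw [LinearMap.range_comp, range_subtype])).trans <|
    (quotientQuotientEquivQuotientSup P Q).trans (quotEquivOfEq _ _ (sup_comm P Q))

end Submodule

/-- The map `f : M^Γ → M_Γ` induced by the identity has finite kernel and
finite cokernel iff `1` is not a multiple root of the minimal polynomial of
`γ` on `M ⊗ ℚ_p`. -/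
theorem stmt_8 (p : ℕ) [Fact p.Prime]
    (M : Type*) [AddCommGroup M] [Module ℤ_[p] M] [Module.Finite ℤ_[p] M]
    (γ : M →ₗ[ℤ_[p]] M)
    (f : LinearMap.ker ((1 : Module.End ℤ_[p] M) - γ) →ₗ[ℤ_[p]]
          M ⧸ LinearMap.range ((1 : Module.End ℤ_[p] M) - γ))
    (hf : f = (LinearMap.range ((1 : Module.End ℤ_[p] M) - γ)).mkQ.comp
          (LinearMap.ker ((1 : Module.End ℤ_[p] M) - γ)).subtype) :
    (Finite (LinearMap.ker f) ∧
        Finite ((M ⧸ LinearMap.range ((1 : Module.End ℤ_[p] M) - γ)) ⧸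
          LinearMap.range f)) ↔
      ¬ ((X - 1) ^ 2 ∣ minpoly ℚ_[p]
        (LinearMap.baseChange ℚ_[p] γ :
          Module.End ℚ_[p] (TensorProduct ℤ_[p] ℚ_[p] M))) := by
  subst hf
  set u := (1 : Module.End ℤ_[p] M) - γ
  set T := u.baseChange ℚ_[p]
  let ι := TensorProduct.mk ℤ_[p] ℚ_[p] M 1
  have hT : ∀ m, T (ι m) = ι (u m) := fun m => LinearMap.baseChange_tmul _ _ _
  have hTγ : T = -(γ.baseChange ℚ_[p] - algebraMap ℚ_[p] _ 1) := by
    simp [T, u, LinearMap.baseChange_sub, LinearMap.baseChange_one]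
  have hker : Finite (LinearMap.ker (((LinearMap.range u).mkQ).comp (LinearMap.ker u).subtype)) ↔
      Disjoint (LinearMap.ker T) (LinearMap.range T) :=
    (Submodule.kerMkQCompSubtypeEquiv _ _).toEquiv.finite_iff.trans <|
      Module.finite_iff_isTorsion.trans (LinearMap.disjoint_ker_range_iff_isTorsion' _ ι hT).symm
  have hcoker : Finite ((M ⧸ LinearMap.range u) ⧸
        LinearMap.range (((LinearMap.range u).mkQ).comp (LinearMap.ker u).subtype)) ↔
      Codisjoint (LinearMap.ker T) (LinearMap.range T) :=
    (Submodule.cokerMkQCompSubtypeEquiv _ _).toEquiv.finite_iff.trans <|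
      Module.finite_iff_isTorsion.trans (LinearMap.codisjoint_ker_range_iff_isTorsion' _ ι hT).symm
  rw [hker, hcoker, ← isCompl_iff,
    Submodule.isCompl_iff_disjoint _ _ ((add_comm _ _).trans T.finrank_range_add_finrank_ker).ge,
    ← C_1, Module.End.not_sq_X_sub_C_dvd_minpoly_iff, hTγ, LinearMap.ker_neg,
    LinearMap.range_neg]
end
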